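/- With G1 and G2 defined piecewise by parity of b as above (p ≥ a real), for all positive integers a and b: G1(a,b)² - G1(a-1,b)² - G2(a,b-1)²/(a+b) = p - 2a. -/

import Mathlib

/-! Since `a ≤ p`, every radicand involved is nonnegative, so each squared matrix element is
its radicand; the identity then becomes a rational identity in `a`, `b`, `p` whose only
denominators are `a + b` and `a + b - 1`. -/

/-- Reduced matrix element `G1` for the `osp(3|2)` parastatistics Fock space of order `p`. -/
noncomputable def G1 (p : ℝ) (a b : ℕ) : ℝ :=
  if Even b then Real.sqrt ((a : ℝ) * ((a : ℝ) + b + 1) * (p - a) / ((a : ℝ) + b))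
  else -Real.sqrt ((a : ℝ) * (p - a))

/-- Reduced matrix element `G2` for the `osp(3|2)` parastatistics Fock space of order `p`. -/
noncomputable def G2 (p : ℝ) (a b : ℕ) : ℝ :=
  if Even b then Real.sqrt ((a : ℝ) + b + 1)
  else -Real.sqrt (((b : ℝ) + 1) * (p + b + 1) / ((a : ℝ) + b))

section Squares

variable {p : ℝ} {a b : ℕ}

theorem G1_sq_of_even (hb : Even b) (hap : (a : ℝ) ≤ p) :
    G1 p a b ^ 2 = a * (a + b + 1) * (p - a) / (a + b) := by
  rw [G1, if_pos hb, Real.sq_sqrt]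
  have : (0 : ℝ) ≤ p - a := sub_nonneg.mpr hap
  positivity

theorem G1_sq_of_odd (hb : Odd b) (hap : (a : ℝ) ≤ p) :
    G1 p a b ^ 2 = a * (p - a) := by
  rw [G1, if_neg (Nat.not_even_iff_odd.mpr hb), neg_sq, Real.sq_sqrt]
  have : (0 : ℝ) ≤ p - a := sub_nonneg.mpr hap
  positivity

theorem G2_sq_of_even (hb : Even b) : G2 p a b ^ 2 = a + b + 1 := by
  rw [G2, if_pos hb, Real.sq_sqrt (by positivity)]

theorem G2_sq_of_odd (hb : Odd b) (hpb : 0 ≤ p + b + 1) :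
    G2 p a b ^ 2 = (b + 1) * (p + b + 1) / (a + b) := by
  rw [G2, if_neg (Nat.not_even_iff_odd.mpr hb), neg_sq, Real.sq_sqrt]
  positivity

end Squares

theorem stmt12 (p : ℝ) : ∀ a b : ℕ, 0 < a → 0 < b → (a : ℝ) ≤ p →
    G1 p a b ^ 2 - G1 p (a - 1) b ^ 2 - G2 p a (b - 1) ^ 2 / ((a : ℝ) + b) = p - 2 * a := by
  intro a b ha hb hap
  have hpred_le : ((a - 1 : ℕ) : ℝ) ≤ p := le_trans (by gcongr; omega) hap
  have ha1 : ((a - 1 : ℕ) : ℝ) = a - 1 := by rw [Nat.cast_pred ha]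
  have hb1 : ((b - 1 : ℕ) : ℝ) = b - 1 := by rw [Nat.cast_pred hb]
  have ha_ge : (1 : ℝ) ≤ a := by exact_mod_cast ha
  have hb_ge : (1 : ℝ) ≤ b := by exact_mod_cast hb
  rcases Nat.even_or_odd b with hb_even | hb_odd
  · have hpred_odd : Odd (b - 1) := Nat.Even.sub_odd hb hb_even odd_one
    rw [G1_sq_of_even hb_even hap, G1_sq_of_even hb_even hpred_le,
      G2_sq_of_odd hpred_odd (by rw [hb1]; linarith), ha1, hb1]
    have hpred_a_add_b : (a : ℝ) - 1 + b ≠ 0 := by linarith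
    have ha_add_pred_b : (a : ℝ) + (b - 1) ≠ 0 := by linarith
    field_simp
    ring
  · have hpred_even : Even (b - 1) := Nat.Odd.sub_odd hb_odd odd_one
    rw [G1_sq_of_odd hb_odd hap, G1_sq_of_odd hb_odd hpred_le, G2_sq_of_even hpred_even, ha1, hb1]
    field_simp
    ring
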